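/- Linear extensions of a finite strict partial order are connected by adjacent transpositions of incomparable elements: any linear extension of (O, ≺) can be transformed into any other by a finite sequence of swaps of adjacent elements that are incomparable under ≺. -/

import Mathlib

/-!
Induct on `L₂ = a :: t`. Write `L₁ = l ++ a :: r`: every element of `l` comes before `a` in `L₁`
and after `a` in `L₂`, so it is incomparable with `a`, and `a` can be bubbled to the front of `L₁`.
What remains, `l ++ r` versus `t`, is again a pair of orderings of the same elements, both
compatible with `prec`.
-/

def IncompSwap {O : Type*} (prec : O → O → Prop) (L L' : List O) : Prop :=
  ∃ (l r : List O) (a b : O), ¬ prec a b ∧ ¬ prec b a ∧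
    L = l ++ a :: b :: r ∧ L' = l ++ b :: a :: r

namespace IncompSwap

variable {O : Type*} {prec : O → O → Prop}

theorem cons {L L' : List O} (c : O) (h : IncompSwap prec L L') :
    IncompSwap prec (c :: L) (c :: L') := by
  obtain ⟨l, r, a, b, hab, hba, rfl, rfl⟩ := h
  exact ⟨c :: l, r, a, b, hab, hba, rfl, rfl⟩

theorem reflTransGen_cons {L L' : List O} (c : O)
    (h : Relation.ReflTransGen (IncompSwap prec) L L') :
    Relation.ReflTransGen (IncompSwap prec) (c :: L) (c :: L') :=
  h.lift (c :: ·) fun _ _ ↦ cons c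

theorem reflTransGen_append_cons {a : O} {l : List O} (r : List O)
    (hl : ∀ b ∈ l, ¬ prec a b ∧ ¬ prec b a) :
    Relation.ReflTransGen (IncompSwap prec) (l ++ a :: r) (a :: (l ++ r)) := by
  induction l with
  | nil => exact .refl
  | cons c l ih =>
    obtain ⟨hac, hca⟩ := hl c List.mem_cons_self
    have hswap : IncompSwap prec (c :: a :: (l ++ r)) (a :: c :: (l ++ r)) :=
      ⟨[], l ++ r, c, a, hca, hac, rfl, rfl⟩
    exact (reflTransGen_cons c (ih fun b hb ↦ hl b (List.mem_cons_of_mem c hb))).tail hswap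

theorem reflTransGen_of_perm {L₁ L₂ : List O} (hperm : L₁.Perm L₂)
    (h₁ : L₁.Pairwise (fun a b => ¬ prec b a)) (h₂ : L₂.Pairwise (fun a b => ¬ prec b a)) :
    Relation.ReflTransGen (IncompSwap prec) L₁ L₂ := by
  induction L₂ generalizing L₁ with
  | nil => rw [List.perm_nil.mp hperm]
  | cons a t ih =>
    obtain ⟨l, r, rfl⟩ := List.append_of_mem (hperm.mem_iff.mpr List.mem_cons_self)
    have hperm' : (l ++ r).Perm t := (List.perm_middle.symm.trans hperm).cons_inv
    have hl : ∀ b ∈ l, ¬ prec a b ∧ ¬ prec b a := fun b hb ↦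
      ⟨(List.pairwise_append.mp h₁).2.2 b hb a List.mem_cons_self,
        (List.pairwise_cons.mp h₂).1 b (hperm'.subset (List.mem_append_left r hb))⟩
    have hlr : (l ++ r).Pairwise (fun a b => ¬ prec b a) :=
      h₁.sublist ((List.sublist_cons_self a r).append_left l)
    exact (reflTransGen_append_cons r hl).trans
      (reflTransGen_cons a (ih hperm' hlr (List.pairwise_cons.mp h₂).2))

end IncompSwap

theorem linear_extensions_connected_by_incomparable_swaps_general
    (O : Type*)
    (prec : O → O → Prop)
    (L₁ L₂ : List O)
    (hnd₁ : L₁.Nodup) (hnd₂ : L₂.Nodup)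
    (hall₁ : ∀ o : O, o ∈ L₁) (hall₂ : ∀ o : O, o ∈ L₂)
    (hext₁ : L₁.Pairwise (fun a b => ¬ prec b a))
    (hext₂ : L₂.Pairwise (fun a b => ¬ prec b a)) :
    Relation.ReflTransGen (IncompSwap prec) L₁ L₂ :=
  IncompSwap.reflTransGen_of_perm
    ((List.perm_ext_iff_of_nodup hnd₁ hnd₂).mpr fun o ↦ iff_of_true (hall₁ o) (hall₂ o))
    hext₁ hext₂

/-- Any two linear extensions of a finite strict partial order are connected
by a finite sequence of adjacent transpositions of incomparable elements. -/
theorem linear_extensions_connected_by_incomparable_swaps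
    (O : Type*) [Fintype O] [DecidableEq O]
    (prec : O → O → Prop) [IsIrrefl O prec] [IsTrans O prec]
    (L₁ L₂ : List O)
    (hnd₁ : L₁.Nodup) (hnd₂ : L₂.Nodup)
    (hall₁ : ∀ o : O, o ∈ L₁) (hall₂ : ∀ o : O, o ∈ L₂)
    (hext₁ : L₁.Pairwise (fun a b => ¬ prec b a))
    (hext₂ : L₂.Pairwise (fun a b => ¬ prec b a)) :
    Relation.ReflTransGen (IncompSwap prec) L₁ L₂ :=
  linear_extensions_connected_by_incomparable_swaps_general O prec L₁ L₂ hnd₁ hnd₂ hall₁ hall₂ hext₁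
    hext₂
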